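/- Let H be a real inner product space and a : H × H → ℝ a bilinear form with a(v,v) ≥ c‖v‖² for some c > 0. If u₁, u₂ ∈ H satisfy the variational inequalities a(u₁, v − u₁) + j(v) − j(u₁) ≥ ⟨f, v − u₁⟩ and a(u₂, v − u₂) + j(v) − j(u₂) ≥ ⟨f, v − u₂⟩ for all v ∈ H, where j : H → ℝ is any function and f ∈ H, then u₁ = u₂. -/

import Mathlib

/-- Uniqueness for elliptic variational inequalities of the second kind. -/
theorem stmt_7 {H : Type*} [NormedAddCommGroup H] [InnerProductSpace ℝ H]
    (a : H →ₗ[ℝ] H →ₗ[ℝ] ℝ) (c : ℝ) (hc : 0 < c)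
    (hcoer : ∀ v : H, c * ‖v‖ ^ 2 ≤ a v v)
    (j : H → ℝ) (f u₁ u₂ : H)
    (h1 : ∀ v : H, (inner ℝ f (v - u₁) : ℝ) ≤ a u₁ (v - u₁) + j v - j u₁)
    (h2 : ∀ v : H, (inner ℝ f (v - u₂) : ℝ) ≤ a u₂ (v - u₂) + j v - j u₂) :
    u₁ = u₂ := by
  have H1 := h1 u₂
  have H2 := h2 u₁
  have hkey : a (u₁ - u₂) (u₁ - u₂) ≤ 0 := by
    have hin : (inner ℝ f (u₂ - u₁) : ℝ) + (inner ℝ f (u₁ - u₂) : ℝ) = 0 := by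
      rw [← inner_add_right]; simp
    have hsum := add_le_add H1 H2
    rw [hin] at hsum
    have : a (u₁ - u₂) (u₁ - u₂) = -(a u₁ (u₂ - u₁) + a u₂ (u₁ - u₂)) := by
      simp [map_sub, LinearMap.sub_apply]; ring
    linarith
  have hnorm : c * ‖u₁ - u₂‖ ^ 2 ≤ 0 := le_trans (hcoer _) hkey
  have hsq : ‖u₁ - u₂‖ ^ 2 = 0 := by nlinarith [sq_nonneg ‖u₁ - u₂‖]
  have : u₁ - u₂ = 0 := by
    have := pow_eq_zero_iff (n := 2) (by norm_num) |>.mp hsq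
    simpa [norm_eq_zero] using this
  exact sub_eq_zero.mp this
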